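/- arXiv:2402.14760 — 2 statements merged into one kernel-verified Lean document; each statement's English description precedes it below -/
import Mathlib

section
/- Let θ range over ℝ^d and φ over ℝ^p, and let D ∈ ℕ, α > 0, β > 0. Suppose the inner loop performs SGD updates θ_{k,t+1} = θ_{k,t} − α ∇_θ ℓ_FT(φ_k, θ_{k,t}; z_{k,t}) for t = 0,…,D−1, where the initialization θ_{k,0} does not depend on φ_k (so ∂θ_{k,0}/∂φ_k = 0), and all maps are twice continuously differentiable. Then for the outer-loop preference sample (x_k, y_k, y'_k), the gradient of ℓ_PL(φ_k, θ_{k,D}) with respect to φ_k equals −(α/β) · ∇_θ A_k · (1 − σ(A_k)) · Σ_{t=0}^{D−1} ∇_φ H_{k,t} ∇_θ^⊤ F_{k,t} R_{k,t} ∏_{j=t+1}^{D−1} (I + α ∇_θ² F_{k,j} R_{k,j}), where A_k = log π_{θ_{k,D}}(y_k|x_k) − log π_{θ_{k,D}}(y'_k|x_k), R_{k,t} = exp(r_{φ_k}(x_{k,t}, y_{k,t})/β), F_{k,t} = log π_{θ_{k,t}}(y_{k,t}|x_{k,t}), and H_{k,t} = r_{φ_k}(x_{k,t}, y_{k,t}).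 -/
open scoped RealInnerProductSpace BigOperators

noncomputable def logisticFn (t : ℝ) : ℝ := 1 / (1 + Real.exp (-t))

/-!
Each SGD step has the form `θ ↦ θ + c(φ) • ∇F(θ)` with `c(φ) = α exp (r_φ / β)`, so forward-mode
differentiation in `φ` turns the inner loop into the linear recursion
`J_{t+1} = (I + c_t ∇²F_t) J_t + ∇F_t ⊗ ∇c_t`, `J_0 = 0`, whose solution is a sum over `t` of
ordered products of the factors `I + α R_j ∇²F_j`. Pairing `J_D` with `∇A` and using
`(-log σ)' = -(1 - σ)` gives the hypergradient; since Hessians are symmetric, the adjoint of each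
product is the same product in reverse order, which moves it onto `∇A` as in the formula.
-/

theorem hasDerivAt_neg_log_logisticFn (a : ℝ) :
    HasDerivAt (fun t => -Real.log (logisticFn t)) (-(1 - logisticFn a)) a := by
  have hlog : (fun t => -Real.log (logisticFn t)) = fun t => Real.log (1 + Real.exp (-t)) := by
    funext t
    rw [logisticFn, one_div, Real.log_inv, neg_neg]
  have hpos : 0 < 1 + Real.exp (-a) := by positivity
  rw [hlog]
  convert (((hasDerivAt_neg a).exp).const_add 1).log hpos.ne' using 1
  rw [logisticFn]
  field_simp
  ring

theorem star_list_prod {R : Type*} [Monoid R] [StarMul R] (l : List R) :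
    star l.prod = (l.map star).reverse.prod := by
  induction l with
  | nil => simp
  | cons a l ih => simp [ih]

theorem inner_list_prod_reverse_apply {𝕜 E : Type*} [RCLike 𝕜] [NormedAddCommGroup E]
    [InnerProductSpace 𝕜 E] [CompleteSpace E] (l : List (E →L[𝕜] E))
    (hl : ∀ T ∈ l, IsSelfAdjoint T) (u w : E) :
    inner 𝕜 u (l.reverse.prod w) = inner 𝕜 (l.prod u) w := by
  have hstar : star l.reverse.prod = l.prod := by
    rw [star_list_prod, List.map_congr_left fun T hT => (hl T (List.mem_reverse.mp hT)).star_eq,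
      List.map_id', List.reverse_reverse]
  rw [← ContinuousLinearMap.adjoint_inner_left, ← ContinuousLinearMap.star_eq_adjoint, hstar]

theorem eq_sum_of_linear_recurrence {A E : Type*} [Monoid A] [AddCommMonoid E]
    [DistribMulAction A E] (M : ℕ → A) (b x : ℕ → E) {n : ℕ}
    (hx : ∀ t < n, x (t + 1) = M t • x t + b t) :
    x n = ((List.range n).map M).reverse.prod • x 0 +
      ∑ t ∈ Finset.range n, ((List.Ico (t + 1) n).map M).reverse.prod • b t := by
  induction n with
  | zero => simp
  | succ n ih =>
    rw [hx n n.lt_succ_self, ih fun t ht => hx t (ht.trans n.lt_succ_self),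
      Finset.sum_range_succ, List.range_succ, List.Ico.self_empty, smul_add, Finset.smul_sum]
    have hlast : ∀ t ∈ Finset.range n, ((List.Ico (t + 1) (n + 1)).map M).reverse.prod • b t
        = M n • ((List.Ico (t + 1) n).map M).reverse.prod • b t := by
      intro t ht
      simp [List.Ico.succ_top (Finset.mem_range.mp ht), mul_smul]
    simp [Finset.sum_congr rfl hlast, mul_smul, add_assoc]

section Unrolling

variable {𝕜 P E : Type*} [NontriviallyNormedField 𝕜] [NormedAddCommGroup P] [NormedSpace 𝕜 P]
  [NormedAddCommGroup E] [NormedSpace 𝕜 E]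

theorem DifferentiableAt.hasFDerivAt_add_smul_comp {x : P → E} {c : P → 𝕜} {G : E → E} {φ : P}
    (hx : DifferentiableAt 𝕜 x φ) (hc : DifferentiableAt 𝕜 c φ)
    (hG : DifferentiableAt 𝕜 G (x φ)) :
    HasFDerivAt (fun ψ => x ψ + c ψ • G (x ψ))
      (fderiv 𝕜 x φ + c φ • (fderiv 𝕜 G (x φ)).comp (fderiv 𝕜 x φ) +
        (fderiv 𝕜 c φ).smulRight (G (x φ))) φ := by
  refine (hx.hasFDerivAt.add
    (hc.hasFDerivAt.smul (hG.hasFDerivAt.comp φ hx.hasFDerivAt))).congr_fderiv ?_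
  rw [add_assoc]
  rfl

variable {x : ℕ → P → E} {c : ℕ → P → 𝕜} {G : ℕ → E → E} {φ : P} {n : ℕ}

theorem differentiableAt_of_eq_add_smul_comp
    (hx : ∀ t < n, x (t + 1) = fun ψ => x t ψ + c t ψ • G t (x t ψ))
    (hx0 : DifferentiableAt 𝕜 (x 0) φ) (hc : ∀ t < n, DifferentiableAt 𝕜 (c t) φ)
    (hG : ∀ t < n, DifferentiableAt 𝕜 (G t) (x t φ)) :
    ∀ t ≤ n, DifferentiableAt 𝕜 (x t) φ := by
  intro t
  induction t with
  | zero => exact fun _ => hx0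
  | succ t ih =>
    intro ht
    rw [hx t ht]
    exact ((ih (Nat.le_of_succ_le ht)).hasFDerivAt_add_smul_comp (hc t ht)
      (hG t ht)).differentiableAt

theorem fderiv_apply_eq_sum_of_eq_add_smul_comp
    (hx : ∀ t < n, x (t + 1) = fun ψ => x t ψ + c t ψ • G t (x t ψ))
    (hx0 : DifferentiableAt 𝕜 (x 0) φ) (hc : ∀ t < n, DifferentiableAt 𝕜 (c t) φ)
    (hG : ∀ t < n, DifferentiableAt 𝕜 (G t) (x t φ)) (v : P) :
    fderiv 𝕜 (x n) φ v =
      ((List.range n).map fun j =>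
          ContinuousLinearMap.id 𝕜 E + c j φ • fderiv 𝕜 (G j) (x j φ)).reverse.prod
        (fderiv 𝕜 (x 0) φ v) +
      ∑ t ∈ Finset.range n,
        ((List.Ico (t + 1) n).map fun j =>
          ContinuousLinearMap.id 𝕜 E + c j φ • fderiv 𝕜 (G j) (x j φ)).reverse.prod
          (fderiv 𝕜 (c t) φ v • G t (x t φ)) := by
  refine eq_sum_of_linear_recurrence
    (fun j => ContinuousLinearMap.id 𝕜 E + c j φ • fderiv 𝕜 (G j) (x j φ))
    (fun t => fderiv 𝕜 (c t) φ v • G t (x t φ)) (fun t => fderiv 𝕜 (x t) φ v) fun t ht => ?_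
  have hxt := differentiableAt_of_eq_add_smul_comp hx hx0 hc hG t ht.le
  rw [hx t ht, (hxt.hasFDerivAt_add_smul_comp (hc t ht) (hG t ht)).fderiv]
  simp [add_smul]

end Unrolling

section Gradient

variable {E : Type*} [NormedAddCommGroup E] [InnerProductSpace ℝ E] [CompleteSpace E]
  {f : E → ℝ} {x : E}

theorem gradient_eq_toDual_symm_comp_fderiv :
    gradient f = (InnerProductSpace.toDual ℝ E).symm ∘ fderiv ℝ f := rfl

theorem ContDiff.differentiable_gradient (hf : ContDiff ℝ 2 f) :
    Differentiable ℝ (gradient f) := by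
  rw [gradient_eq_toDual_symm_comp_fderiv]
  exact (InnerProductSpace.toDual ℝ E).symm.differentiable.comp
    ((hf.fderiv_right (m := 1) (by norm_num)).differentiable (by norm_num))

theorem inner_fderiv_gradient_apply (v w : E) :
    ⟪fderiv ℝ (gradient f) x v, w⟫ = fderiv ℝ (fderiv ℝ f) x v w := by
  rw [gradient_eq_toDual_symm_comp_fderiv, LinearIsometryEquiv.comp_fderiv]
  exact InnerProductSpace.toDual_symm_apply

theorem ContDiff.isSelfAdjoint_fderiv_gradient (hf : ContDiff ℝ 2 f) (x : E) :
    IsSelfAdjoint (fderiv ℝ (gradient f) x) := by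
  refine ContinuousLinearMap.isSelfAdjoint_iff_isSymmetric.mpr fun v w => ?_
  have hsymm := hf.contDiffAt.isSymmSndFDerivAt (x := x) (by simp)
  simp only [ContinuousLinearMap.coe_coe]
  rw [inner_fderiv_gradient_apply, real_inner_comm, inner_fderiv_gradient_apply, hsymm]

theorem sub_smul_gradient_neg_mul_const (hf : DifferentiableAt ℝ f x) (α c : ℝ) :
    x - α • gradient (fun y => -f y * c) x = x + (α * c) • gradient f x := by
  have hneg : (fun y => -f y * c) = fun y => f y * -c := by
    funext y
    ring
  simp only [hneg, gradient, fderiv_mul_const hf, map_smul]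
  module

theorem HasGradientAt.const_mul_exp_div {g : E} (hf : HasGradientAt f g x) (α β : ℝ) :
    HasGradientAt (fun y => α * Real.exp (f y / β)) ((α * Real.exp (f x / β) / β) • g) x := by
  rw [hasGradientAt_iff_hasFDerivAt] at hf ⊢
  refine (((hf.mul_const β⁻¹).exp).const_mul α).congr_fderiv ?_
  ext v
  simp only [smul_apply, InnerProductSpace.toDual_apply_apply, real_inner_smul_left, smul_eq_mul,
    div_eq_mul_inv]
  ring

theorem HasDerivAt.gradient_comp {ℓ : ℝ → ℝ} {ℓ' : ℝ} (hℓ : HasDerivAt ℓ ℓ' (f x))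
    (hf : DifferentiableAt ℝ f x) :
    gradient (fun y => ℓ (f y)) x = ℓ' • gradient f x := by
  refine HasGradientAt.gradient (hasGradientAt_iff_hasFDerivAt.mpr ?_)
  rw [map_smul]
  exact hℓ.comp_hasFDerivAt x hf.hasGradientAt.hasFDerivAt

theorem inner_gradient_comp {P : Type*} [NormedAddCommGroup P] [InnerProductSpace ℝ P]
    [CompleteSpace P] {y : P → E} {φ : P} (hf : DifferentiableAt ℝ f (y φ))
    (hy : DifferentiableAt ℝ y φ) (v : P) :
    ⟪gradient (fun ψ => f (y ψ)) φ, v⟫ = ⟪gradient f (y φ), fderiv ℝ y φ v⟫ := by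
  rw [inner_gradient_left, inner_gradient_left, fderiv_fun_comp φ hf hy,
    ContinuousLinearMap.comp_apply]

end Gradient

theorem hypergradient_formula_general {d p : ℕ} {Z : Type*}
    (logπ : EuclideanSpace ℝ (Fin d) → Z → ℝ)
    (r : EuclideanSpace ℝ (Fin p) → Z → ℝ)
    (fy fy' : EuclideanSpace ℝ (Fin d) → ℝ)
    (α β : ℝ)
    (D : ℕ) (z : ℕ → Z)
    (θ0 : EuclideanSpace ℝ (Fin d))
    (ℓFT : EuclideanSpace ℝ (Fin p) → EuclideanSpace ℝ (Fin d) → Z → ℝ)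
    (hℓFT : ∀ φ θ zz, ℓFT φ θ zz = -(logπ θ zz) * Real.exp (r φ zz / β))
    (traj : EuclideanSpace ℝ (Fin p) → ℕ → EuclideanSpace ℝ (Fin d))
    (htraj0 : ∀ φ, traj φ 0 = θ0)
    (htrajstep : ∀ φ t, t < D →
      traj φ (t + 1) = traj φ t - α • gradient (fun s => ℓFT φ s (z t)) (traj φ t))
    (hC2logπ : ∀ zz, ContDiff ℝ 2 fun s => logπ s zz)
    (hC2r : ∀ zz, ContDiff ℝ 2 fun q => r q zz)
    (hC2fy : ContDiff ℝ 2 fy) (hC2fy' : ContDiff ℝ 2 fy')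
    (φk : EuclideanSpace ℝ (Fin p)) :
    gradient (fun q => -Real.log (logisticFn (fy (traj q D) - fy' (traj q D)))) φk
      = (-(α / β) * (1 - logisticFn (fy (traj φk D) - fy' (traj φk D)))) •
          ∑ t ∈ Finset.range D,
            (Real.exp (r φk (z t) / β) *
                ⟪gradient (fun s => logπ s (z t)) (traj φk t),
                  ((List.Ico (t + 1) D).map (fun j =>
                        ContinuousLinearMap.id ℝ (EuclideanSpace ℝ (Fin d)) +
                          (α * Real.exp (r φk (z j) / β)) •
                            fderiv ℝ (fun s => gradient (fun u => logπ u (z j)) s)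
                              (traj φk j))).prod
                    (gradient (fun s => fy s - fy' s) (traj φk D))⟫) •
              gradient (fun q => r q (z t)) φk := by
  set G : ℕ → EuclideanSpace ℝ (Fin d) → EuclideanSpace ℝ (Fin d) :=
    fun j => gradient (fun u => logπ u (z j))
  set c : ℕ → EuclideanSpace ℝ (Fin p) → ℝ := fun t φ => α * Real.exp (r φ (z t) / β)
  have hc : ∀ t, HasGradientAt (c t)
      ((α * Real.exp (r φk (z t) / β) / β) • gradient (fun q => r q (z t)) φk) φk := fun t =>
    ((hC2r (z t)).differentiable two_ne_zero φk).hasGradientAt.const_mul_exp_div α β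
  have hupdate : ∀ t < D,
      (fun φ => traj φ (t + 1)) = fun φ => traj φ t + c t φ • G t (traj φ t) := by
    intro t ht
    funext φ
    simp only [htrajstep φ t ht, hℓFT]
    exact sub_smul_gradient_neg_mul_const ((hC2logπ (z t)).differentiable two_ne_zero _) _ _
  have hconst : (fun φ => traj φ 0) = fun _ => θ0 := funext htraj0
  have hx0 : DifferentiableAt ℝ (fun φ => traj φ 0) φk := hconst ▸ differentiableAt_const θ0
  have hdc : ∀ t < D, DifferentiableAt ℝ (c t) φk := fun t _ => (hc t).differentiableAt
  have hdG : ∀ t < D, DifferentiableAt ℝ (G t) (traj φk t) := fun t _ =>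
    (hC2logπ (z t)).differentiable_gradient _
  have hdA : DifferentiableAt ℝ (fun s => fy s - fy' s) (traj φk D) :=
    (hC2fy.differentiable two_ne_zero _).sub (hC2fy'.differentiable two_ne_zero _)
  have hloss := hasDerivAt_neg_log_logisticFn (fy (traj φk D) - fy' (traj φk D))
  have hlossA : DifferentiableAt ℝ (fun s => -Real.log (logisticFn (fy s - fy' s))) (traj φk D) :=
    hloss.differentiableAt.comp (f := fun s => fy s - fy' s) _ hdA
  have hselfAdj : ∀ t, ∀ T ∈ (List.Ico (t + 1) D).map
      (fun j => ContinuousLinearMap.id ℝ _ + c j φk • fderiv ℝ (G j) (traj φk j)),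
      IsSelfAdjoint T := by
    simp only [List.mem_map]
    rintro t _ ⟨j, -, rfl⟩
    exact (IsSelfAdjoint.one _).add
      ((IsSelfAdjoint.all _).smul ((hC2logπ (z j)).isSelfAdjoint_fderiv_gradient _))
  have hD := differentiableAt_of_eq_add_smul_comp (x := fun t φ => traj φ t) hupdate hx0 hdc hdG
  refine ext_inner_right ℝ fun v => ?_
  rw [inner_gradient_comp (y := fun φ => traj φ D) hlossA (hD D le_rfl),
    hloss.gradient_comp (f := fun s => fy s - fy' s) hdA, real_inner_smul_left,
    fderiv_apply_eq_sum_of_eq_add_smul_comp (x := fun t φ => traj φ t) hupdate hx0 hdc hdG,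
    hconst, fderiv_const_apply, zero_apply, map_zero, zero_add,
    inner_sum, Finset.mul_sum, real_inner_smul_left, sum_inner, Finset.mul_sum]
  refine Finset.sum_congr rfl fun t _ => ?_
  rw [inner_list_prod_reverse_apply _ (hselfAdj t), (hc t).fderiv_apply, real_inner_smul_right,
    real_inner_smul_left, real_inner_smul_left, real_inner_comm (G t (traj φk t))]
  ring

/-- Proposition 1: analytical form of the hypergradient.
The inner loop performs the SGD updates
`θ_{k,t+1} = θ_{k,t} - α ∇_θ ℓ_FT(φ_k, θ_{k,t}; z_{k,t})` for `t = 0,…,D-1`, where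
`ℓ_FT(φ,θ;z) = -log π_θ(y|x) · exp(r_φ(x,y)/β)`, the initialization `θ_{k,0} = θ0` does
not depend on `φ_k`, and all maps are twice continuously differentiable.  Then for the
outer preference sample `(x_k, y_k, y'_k)` (with `fy θ = log π_θ(y_k|x_k)` and
`fy' θ = log π_θ(y'_k|x_k)`), the gradient of
`ℓ_PL(φ_k, θ_{k,D}) = -log σ(log π_{θ_{k,D}}(y_k|x_k) - log π_{θ_{k,D}}(y'_k|x_k))`
with respect to `φ_k` equals
`-(α/β) ∇_θA_k (1-σ(A_k)) Σ_{t<D} ∇_φH_{k,t} ∇_θ^⊤F_{k,t} R_{k,t}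
  ∏_{j=t+1}^{D-1} (I + α ∇_θ²F_{k,j} R_{k,j})`,
where `A_k = log π_{θ_{k,D}}(y_k|x_k) - log π_{θ_{k,D}}(y'_k|x_k)`,
`R_{k,t} = exp(r_{φ_k}(x_{k,t},y_{k,t})/β)`, `F_{k,t} = log π_{θ_{k,t}}(y_{k,t}|x_{k,t})`,
`H_{k,t} = r_{φ_k}(x_{k,t},y_{k,t})`.  The `p×d` matrix
`∇_φH ∇_θ^⊤F R ∏(I+α∇²F R)` is applied to the vector `∇_θA_k (1-σ(A_k))` as
`R ⟪∇_θF, (∏(I+α∇²F R)) ∇_θA⟫ • ∇_φH`. -/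
theorem hypergradient_formula {d p : ℕ} {Z : Type*}
    (logπ : EuclideanSpace ℝ (Fin d) → Z → ℝ)
    (r : EuclideanSpace ℝ (Fin p) → Z → ℝ)
    (fy fy' : EuclideanSpace ℝ (Fin d) → ℝ)
    (α β : ℝ) (hα : 0 < α) (hβ : 0 < β)
    (D : ℕ) (z : ℕ → Z)
    (θ0 : EuclideanSpace ℝ (Fin d))
    (ℓFT : EuclideanSpace ℝ (Fin p) → EuclideanSpace ℝ (Fin d) → Z → ℝ)
    (hℓFT : ∀ φ θ zz, ℓFT φ θ zz = -(logπ θ zz) * Real.exp (r φ zz / β))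
    (traj : EuclideanSpace ℝ (Fin p) → ℕ → EuclideanSpace ℝ (Fin d))
    (htraj0 : ∀ φ, traj φ 0 = θ0)
    (htrajstep : ∀ φ t, t < D →
      traj φ (t + 1) = traj φ t - α • gradient (fun s => ℓFT φ s (z t)) (traj φ t))
    (hC2logπ : ∀ zz, ContDiff ℝ 2 fun s => logπ s zz)
    (hC2r : ∀ zz, ContDiff ℝ 2 fun q => r q zz)
    (hC2fy : ContDiff ℝ 2 fy) (hC2fy' : ContDiff ℝ 2 fy')
    (φk : EuclideanSpace ℝ (Fin p)) :
    gradient (fun q => -Real.log (logisticFn (fy (traj q D) - fy' (traj q D)))) φk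
      = (-(α / β) * (1 - logisticFn (fy (traj φk D) - fy' (traj φk D)))) •
          ∑ t ∈ Finset.range D,
            (Real.exp (r φk (z t) / β) *
                ⟪gradient (fun s => logπ s (z t)) (traj φk t),
                  ((List.Ico (t + 1) D).map (fun j =>
                        ContinuousLinearMap.id ℝ (EuclideanSpace ℝ (Fin d)) +
                          (α * Real.exp (r φk (z j) / β)) •
                            fderiv ℝ (fun s => gradient (fun u => logπ u (z j)) s)
                              (traj φk j))).prod
                    (gradient (fun s => fy s - fy' s) (traj φk D))⟫) •
              gradient (fun q => r q (z t)) φk :=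
  hypergradient_formula_general logπ r fy fy' α β D z θ0 ℓFT hℓFT traj htraj0 htrajstep hC2logπ hC2r
    hC2fy hC2fy' φk
end

section
/- Under the assumptions below, for every preference sample ν = (x,y,y'), every φ, and all θ, θ': ‖∇_θ ℓ_PL(φ,θ;ν) − ∇_θ ℓ_PL(φ,θ';ν)‖ ≤ (2L + M²) ‖θ − θ'‖, where ∇_θ ℓ_PL(φ,θ;ν) = −σ(log π_θ(y'|x) − log π_θ(y|x)) · (∇_θ log π_θ(y|x) − ∇_θ log π_θ(y'|x)). -/
theorem Real.lipschitzWith_sigmoid : LipschitzWith 4⁻¹ Real.sigmoid := by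
  refine lipschitzWith_of_nnnorm_deriv_le differentiable_sigmoid fun x => ?_
  have h0 := sigmoid_nonneg x
  have h1 := sigmoid_le_one x
  rw [deriv_sigmoid, ← NNReal.coe_le_coe, coe_nnnorm, Real.norm_eq_abs,
    abs_of_nonneg (mul_nonneg h0 (sub_nonneg.2 h1))]
  push_cast
  nlinarith [sq_nonneg (sigmoid x - 2⁻¹)]

theorem logisticFn_eq_sigmoid : logisticFn = Real.sigmoid :=
  funext fun _ => one_div _

theorem abs_logisticFn_le_one (t : ℝ) : |logisticFn t| ≤ 1 := by
  rw [logisticFn_eq_sigmoid, abs_of_nonneg (Real.sigmoid_nonneg t)]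
  exact Real.sigmoid_le_one t

theorem abs_logisticFn_sub_le (s t : ℝ) : |logisticFn s - logisticFn t| ≤ 4⁻¹ * |s - t| := by
  simpa only [logisticFn_eq_sigmoid, Real.dist_eq, NNReal.coe_inv, NNReal.coe_ofNat] using
    Real.lipschitzWith_sigmoid.dist_le_mul s t

section

variable {E F : Type*} [SeminormedAddCommGroup E] [SeminormedAddCommGroup F]

theorem norm_sub_sub_sub_le_of_le {u v : E → F} {x y : E} {A B : ℝ}
    (hu : ‖u x - u y‖ ≤ A * ‖x - y‖) (hv : ‖v x - v y‖ ≤ B * ‖x - y‖) :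
    ‖(u x - v x) - (u y - v y)‖ ≤ (A + B) * ‖x - y‖ := by
  calc _ ≤ ‖u x - u y‖ + ‖v x - v y‖ := by
        simpa only [dist_eq_norm] using dist_sub_sub_le (u x) (v x) (u y) (v y)
    _ ≤ (A + B) * ‖x - y‖ := by rw [add_mul]; exact add_le_add hu hv

theorem abs_logisticFn_sub_sub_le {f g : E → ℝ} {x y : E} {M : ℝ}
    (hf : |f x - f y| ≤ M * ‖x - y‖) (hg : |g x - g y| ≤ M * ‖x - y‖) :
    |logisticFn (g x - f x) - logisticFn (g y - f y)| ≤ M / 2 * ‖x - y‖ := by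
  have hdiff : |(g x - f x) - (g y - f y)| ≤ (M + M) * ‖x - y‖ := by
    simpa only [Real.norm_eq_abs] using norm_sub_sub_sub_le_of_le (u := g) (v := f) hg hf
  linarith [abs_logisticFn_sub_le (g x - f x) (g y - f y)]

theorem norm_smul_sub_smul_le [NormedSpace ℝ F] {a : E → ℝ} {u : E → F} {x y : E} {K L B : ℝ}
    (ha : |a x| ≤ 1) (hak : |a x - a y| ≤ K * ‖x - y‖) (hu : ‖u x - u y‖ ≤ L * ‖x - y‖)
    (hB : ‖u y‖ ≤ B) :
    ‖a x • u x - a y • u y‖ ≤ (L + K * B) * ‖x - y‖ := by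
  have hK : 0 ≤ K * ‖x - y‖ := (abs_nonneg _).trans hak
  calc ‖a x • u x - a y • u y‖ = ‖a x • (u x - u y) + (a x - a y) • u y‖ := by
        congr 1; module
    _ ≤ |a x| * ‖u x - u y‖ + |a x - a y| * ‖u y‖ := by
        simpa only [norm_smul, Real.norm_eq_abs] using
          norm_add_le (a x • (u x - u y)) ((a x - a y) • u y)
    _ ≤ 1 * (L * ‖x - y‖) + K * ‖x - y‖ * B := by gcongr
    _ = (L + K * B) * ‖x - y‖ := by ring

end

/-- No differentiability is needed: where `f` is not differentiable its gradient is `0`. -/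
theorem norm_gradient_le_of_abs_sub_le {E : Type*} [NormedAddCommGroup E] [InnerProductSpace ℝ E]
    [CompleteSpace E] {f : E → ℝ} {C : ℝ} (hC : 0 ≤ C)
    (hf : ∀ x y, |f x - f y| ≤ C * ‖x - y‖) (x : E) : ‖gradient f x‖ ≤ C := by
  rw [gradient, LinearIsometryEquiv.norm_map]
  exact norm_fderiv_le_of_lip' ℝ hC (.of_forall fun y => hf y x)

theorem pl_gradient_lipschitz_general {d : ℕ} {V : Type*}
    (fy fy' : EuclideanSpace ℝ (Fin d) → V → ℝ) (M L : ℝ)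
    (hMfy : ∀ (ν : V) (θ θ' : EuclideanSpace ℝ (Fin d)),
      |fy θ ν - fy θ' ν| ≤ M * ‖θ - θ'‖)
    (hMfy' : ∀ (ν : V) (θ θ' : EuclideanSpace ℝ (Fin d)),
      |fy' θ ν - fy' θ' ν| ≤ M * ‖θ - θ'‖)
    (hLfy : ∀ (ν : V) (θ θ' : EuclideanSpace ℝ (Fin d)),
      ‖gradient (fun s => fy s ν) θ - gradient (fun s => fy s ν) θ'‖ ≤ L * ‖θ - θ'‖)
    (hLfy' : ∀ (ν : V) (θ θ' : EuclideanSpace ℝ (Fin d)),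
      ‖gradient (fun s => fy' s ν) θ - gradient (fun s => fy' s ν) θ'‖ ≤ L * ‖θ - θ'‖) :
    ∀ (ν : V) (θ θ' : EuclideanSpace ℝ (Fin d)),
      ‖(-(logisticFn (fy' θ ν - fy θ ν))) •
            (gradient (fun s => fy s ν) θ - gradient (fun s => fy' s ν) θ) -
          (-(logisticFn (fy' θ' ν - fy θ' ν))) •
            (gradient (fun s => fy s ν) θ' - gradient (fun s => fy' s ν) θ')‖
        ≤ (2 * L + M ^ 2) * ‖θ - θ'‖ := by
  intro ν θ θ'
  obtain rfl | hne := eq_or_ne θ θ'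
  · simp
  have hM : 0 ≤ M := nonneg_of_mul_nonneg_left ((abs_nonneg _).trans (hMfy ν θ θ'))
    (norm_pos_iff.2 (sub_ne_zero.2 hne))
  have hσ := abs_logisticFn_sub_sub_le (f := fun s => fy s ν) (g := fun s => fy' s ν)
    (hMfy ν θ θ') (hMfy' ν θ θ')
  have hgrad := norm_sub_sub_sub_le_of_le (hLfy ν θ θ') (hLfy' ν θ θ')
  have hbound : ‖gradient (fun s => fy s ν) θ' - gradient (fun s => fy' s ν) θ'‖ ≤ M + M :=
    (norm_sub_le _ _).trans <| add_le_add (norm_gradient_le_of_abs_sub_le hM (hMfy ν) θ')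
      (norm_gradient_le_of_abs_sub_le hM (hMfy' ν) θ')
  calc _ ≤ (L + L + M / 2 * (M + M)) * ‖θ - θ'‖ :=
        norm_smul_sub_smul_le (a := fun θ => -logisticFn (fy' θ ν - fy θ ν))
          (u := fun θ => gradient (fun s => fy s ν) θ - gradient (fun s => fy' s ν) θ)
          (by simpa only [abs_neg] using abs_logisticFn_le_one _)
          (by rwa [neg_sub_neg, abs_sub_comm]) hgrad hbound
    _ = (2 * L + M ^ 2) * ‖θ - θ'‖ := by ring

/-- the gradient in `θ` of the preference loss
`ℓ_PL(φ,θ;ν) = -log σ(log π_θ(y|x) - log π_θ(y'|x))`, given by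
`∇_θ ℓ_PL = -σ(log π_θ(y'|x) - log π_θ(y|x)) • (∇_θ log π_θ(y|x) - ∇_θ log π_θ(y'|x))`,
is `(2L + M²)`-Lipschitz in `θ`, provided for every pair `(x,y)` the map
`θ ↦ log π_θ(y|x)` is `M`-Lipschitz and `θ ↦ ∇_θ log π_θ(y|x)` is `L`-Lipschitz.
Here `V` is the type of preference samples `ν = (x,y,y')`, and `fy θ ν`, `fy' θ ν` denote
`log π_θ(y|x)` and `log π_θ(y'|x)` respectively. -/
theorem pl_gradient_lipschitz {d : ℕ} {V : Type*}
    (fy fy' : EuclideanSpace ℝ (Fin d) → V → ℝ) (M L : ℝ)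
    (hdfy : ∀ ν : V, Differentiable ℝ fun θ => fy θ ν)
    (hdfy' : ∀ ν : V, Differentiable ℝ fun θ => fy' θ ν)
    (hMfy : ∀ (ν : V) (θ θ' : EuclideanSpace ℝ (Fin d)),
      |fy θ ν - fy θ' ν| ≤ M * ‖θ - θ'‖)
    (hMfy' : ∀ (ν : V) (θ θ' : EuclideanSpace ℝ (Fin d)),
      |fy' θ ν - fy' θ' ν| ≤ M * ‖θ - θ'‖)
    (hLfy : ∀ (ν : V) (θ θ' : EuclideanSpace ℝ (Fin d)),
      ‖gradient (fun s => fy s ν) θ - gradient (fun s => fy s ν) θ'‖ ≤ L * ‖θ - θ'‖)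
    (hLfy' : ∀ (ν : V) (θ θ' : EuclideanSpace ℝ (Fin d)),
      ‖gradient (fun s => fy' s ν) θ - gradient (fun s => fy' s ν) θ'‖ ≤ L * ‖θ - θ'‖) :
    ∀ (ν : V) (θ θ' : EuclideanSpace ℝ (Fin d)),
      ‖(-(logisticFn (fy' θ ν - fy θ ν))) •
            (gradient (fun s => fy s ν) θ - gradient (fun s => fy' s ν) θ) -
          (-(logisticFn (fy' θ' ν - fy θ' ν))) •
            (gradient (fun s => fy s ν) θ' - gradient (fun s => fy' s ν) θ')‖
        ≤ (2 * L + M ^ 2) * ‖θ - θ'‖ :=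
  pl_gradient_lipschitz_general fy fy' M L hMfy hMfy' hLfy hLfy'
end
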